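/- Let μ > 1 and suppose H' satisfies |H'(x)| ≤ C e^{−μ√2|x|} and the limit ĥ₊ = ∫_{−∞}^{∞} e^{√2 z} H'(z) dz exists (absolutely convergent). Then lim_{ψ→+∞} e^{ψ} S(ψ) = 4·∫_{−∞}^{∞} e^{√2 z} H'(z) dz, where S(ψ) = ∫_ℝ H'(y + ψ/√2) W_h(y) dy. -/

import Mathlib

open Real Filter Topology MeasureTheory

/-- The Melnikov weight `W_h(y) = tanh²((√2/2)y)(1 − tanh²((√2/2)y))`. -/
noncomputable def Wh (y : ℝ) : ℝ :=
  (Real.tanh (Real.sqrt 2 / 2 * y)) ^ 2 * (1 - (Real.tanh (Real.sqrt 2 / 2 * y)) ^ 2)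

noncomputable def gfun (y : ℝ) : ℝ := Real.exp (-(Real.sqrt 2 * y)) * Wh y

lemma continuous_tanh' : Continuous Real.tanh := by
  have : Real.tanh = fun x => Real.sinh x / Real.cosh x := funext Real.tanh_eq_sinh_div_cosh
  rw [this]
  exact Real.continuous_sinh.div Real.continuous_cosh fun x => (Real.cosh_pos x).ne'

lemma gfun_eq (y : ℝ) : gfun y =
    4 * Real.tanh (Real.sqrt 2 / 2 * y) ^ 2 / (Real.exp (Real.sqrt 2 * y) + 1) ^ 2 := by
  unfold gfun Wh
  set t := Real.sqrt 2 / 2 * y with ht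
  have h2t : Real.sqrt 2 * y = 2 * t := by rw [ht]; ring
  have hc : Real.cosh t ≠ 0 := (Real.cosh_pos t).ne'
  have h1 : 1 - Real.tanh t ^ 2 = 1 / Real.cosh t ^ 2 := by
    rw [Real.tanh_eq_sinh_div_cosh]
    field_simp
    linarith [Real.cosh_sq t]
  rw [h1, h2t, Real.cosh_eq]
  have he : Real.exp (2 * t) = Real.exp t * Real.exp t := by
    rw [← Real.exp_add]; ring_nf
  have hne : Real.exp (-(2 * t)) = (Real.exp t)⁻¹ * (Real.exp t)⁻¹ := by
    rw [← Real.exp_neg, ← Real.exp_add]; ring_nf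
  have hnt : Real.exp (-t) = (Real.exp t)⁻¹ := Real.exp_neg t
  rw [hne, hnt]
  have hpos : Real.exp t ≠ 0 := Real.exp_ne_zero t
  rw [he]
  field_simp
  ring

lemma gfun_nonneg (y : ℝ) : 0 ≤ gfun y := by
  rw [gfun_eq]; positivity

lemma tanh_sq_le_one (x : ℝ) : Real.tanh x ^ 2 ≤ 1 := by
  rw [Real.tanh_eq_sinh_div_cosh, div_pow, div_le_one (by positivity)]
  nlinarith [Real.cosh_sq x]

lemma gfun_le_four (y : ℝ) : gfun y ≤ 4 := by
  rw [gfun_eq]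
  have h1 : (1:ℝ) ≤ (Real.exp (Real.sqrt 2 * y) + 1) ^ 2 := by
    nlinarith [Real.exp_pos (Real.sqrt 2 * y)]
  calc 4 * Real.tanh (Real.sqrt 2 / 2 * y) ^ 2 / (Real.exp (Real.sqrt 2 * y) + 1) ^ 2
      ≤ 4 * Real.tanh (Real.sqrt 2 / 2 * y) ^ 2 := div_le_self (by positivity) h1
    _ ≤ 4 := by nlinarith [tanh_sq_le_one (Real.sqrt 2 / 2 * y)]

lemma tanh_tendsto_atBot : Tendsto Real.tanh atBot (𝓝 (-1)) := by
  have heq : Real.tanh = fun x => (Real.exp (2*x) - 1) / (Real.exp (2*x) + 1) := by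
    funext x
    rw [Real.tanh_eq_sinh_div_cosh, Real.sinh_eq, Real.cosh_eq,
      show Real.exp (2*x) = Real.exp x * Real.exp x by rw [← Real.exp_add]; ring_nf,
      Real.exp_neg]
    have h := Real.exp_ne_zero x
    field_simp
  rw [heq]
  have he : Tendsto (fun x : ℝ => Real.exp (2*x)) atBot (𝓝 0) := by
    apply Real.tendsto_exp_atBot.comp
    exact (tendsto_const_mul_atBot_of_pos (by norm_num)).mpr tendsto_id
  have := (he.sub (tendsto_const_nhds (x := (1:ℝ)))).div
    (he.add (tendsto_const_nhds (x := (1:ℝ)))) (show (0:ℝ)+1 ≠ 0 by norm_num)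
  convert this using 2 <;> norm_num

lemma gfun_tendsto : Tendsto gfun atBot (𝓝 4) := by
  have hfe : gfun = fun y => 4 * Real.tanh (Real.sqrt 2 / 2 * y) ^ 2 /
      (Real.exp (Real.sqrt 2 * y) + 1) ^ 2 := funext gfun_eq
  rw [hfe]
  have h1 : Tendsto (fun y : ℝ => Real.sqrt 2 / 2 * y) atBot atBot :=
    (tendsto_const_mul_atBot_of_pos (by positivity)).mpr tendsto_id
  have h2 : Tendsto (fun y : ℝ => Real.sqrt 2 * y) atBot atBot :=
    (tendsto_const_mul_atBot_of_pos (Real.sqrt_pos.mpr (by norm_num))).mpr tendsto_id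
  have ht : Tendsto (fun y : ℝ => Real.tanh (Real.sqrt 2 / 2 * y)) atBot (𝓝 (-1)) :=
    tanh_tendsto_atBot.comp h1
  have he : Tendsto (fun y : ℝ => Real.exp (Real.sqrt 2 * y)) atBot (𝓝 0) :=
    Real.tendsto_exp_atBot.comp h2
  have := ((tendsto_const_nhds (x := (4:ℝ))).mul (ht.pow 2)).div
    ((he.add (tendsto_const_nhds (x := (1:ℝ)))).pow 2) (show ((0:ℝ)+1)^2 ≠ 0 by norm_num)
  convert this using 2 <;> norm_num

lemma continuous_Wh : Continuous Wh := by
  unfold Wh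
  have h : Continuous fun y : ℝ => Real.tanh (Real.sqrt 2 / 2 * y) :=
    continuous_tanh'.comp (continuous_const.mul continuous_id)
  exact (h.pow 2).mul (continuous_const.sub (h.pow 2))

lemma continuous_gfun : Continuous gfun :=
  (Real.continuous_exp.comp (continuous_const.mul continuous_id).neg).mul continuous_Wh


/-- Exponential decay lemma, `μ > 1` case: if `|H'(x)| ≤ C e^{−μ√2|x|}` with `μ > 1`
and `∫ e^{√2 z} H'(z) dz` converges absolutely, then the Melnikov function
`S(ψ) = ∫ H'(y + ψ/√2) W_h(y) dy` satisfies
`e^{ψ} S(ψ) → 4 ∫ e^{√2 z} H'(z) dz` as `ψ → +∞`. -/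
theorem melnikov_exponential_decay_fast (μ : ℝ) (hμ : 1 < μ)
    (H : ℝ → ℝ) (hH : ContDiff ℝ 1 H) (C : ℝ)
    (hbd : ∀ x : ℝ, |deriv H x| ≤ C * Real.exp (-(μ * Real.sqrt 2 * |x|)))
    (hint : Integrable (fun z : ℝ => Real.exp (Real.sqrt 2 * z) * deriv H z)) :
    Tendsto (fun ψ : ℝ =>
        Real.exp ψ * ∫ y : ℝ, deriv H (y + ψ / Real.sqrt 2) * Wh y) atTop
      (𝓝 (4 * ∫ z : ℝ, Real.exp (Real.sqrt 2 * z) * deriv H z)) := by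
  have hs2 : (0:ℝ) < Real.sqrt 2 := Real.sqrt_pos.mpr (by norm_num)
  have hcd : Continuous (deriv H) := hH.continuous_deriv le_rfl
  -- Step 1: rewrite the function
  have key : ∀ ψ : ℝ,
      Real.exp ψ * ∫ y : ℝ, deriv H (y + ψ / Real.sqrt 2) * Wh y
        = ∫ z : ℝ, (Real.exp (Real.sqrt 2 * z) * deriv H z) * gfun (z - ψ / Real.sqrt 2) := by
    intro ψ
    have h1 : (∫ y : ℝ, deriv H (y + ψ / Real.sqrt 2) * Wh y)
        = ∫ z : ℝ, deriv H z * Wh (z - ψ / Real.sqrt 2) := by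
      have := MeasureTheory.integral_sub_right_eq_self (μ := MeasureTheory.volume)
        (fun y : ℝ => deriv H (y + ψ / Real.sqrt 2) * Wh y) (ψ / Real.sqrt 2)
      rw [← this]
      congr 1
      funext z
      simp [sub_add_cancel]
    rw [h1, ← MeasureTheory.integral_const_mul]
    congr 1
    funext z
    unfold gfun
    have hψ : Real.sqrt 2 * (ψ / Real.sqrt 2) = ψ := mul_div_cancel₀ ψ hs2.ne' ▸ by
      field_simp
    rw [show -(Real.sqrt 2 * (z - ψ / Real.sqrt 2)) = ψ - Real.sqrt 2 * z by
      rw [mul_sub, hψ]; ring]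
    rw [Real.exp_sub]
    have := Real.exp_ne_zero (Real.sqrt 2 * z)
    field_simp
  simp only [key]
  -- Step 2: dominated convergence
  have h4 : (4 : ℝ) * ∫ z : ℝ, Real.exp (Real.sqrt 2 * z) * deriv H z
      = ∫ z : ℝ, 4 * (Real.exp (Real.sqrt 2 * z) * deriv H z) :=
    (MeasureTheory.integral_const_mul 4 _).symm
  rw [h4]
  apply MeasureTheory.tendsto_integral_filter_of_dominated_convergence
    (bound := fun z => 4 * |Real.exp (Real.sqrt 2 * z) * deriv H z|)
  · filter_upwards with ψ
    exact ((Real.continuous_exp.comp (continuous_const.mul continuous_id)).mul hcd).mul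
      (continuous_gfun.comp (continuous_id.sub continuous_const)) |>.aestronglyMeasurable
  · filter_upwards with ψ
    filter_upwards with z
    have h1 : |gfun (z - ψ / Real.sqrt 2)| ≤ 4 := by
      rw [abs_of_nonneg (gfun_nonneg _)]; exact gfun_le_four _
    have h2 : ‖Real.exp (Real.sqrt 2 * z) * deriv H z * gfun (z - ψ / Real.sqrt 2)‖
        = |Real.exp (Real.sqrt 2 * z) * deriv H z| * |gfun (z - ψ / Real.sqrt 2)| := by
      rw [Real.norm_eq_abs, abs_mul]
    rw [h2]
    nlinarith [abs_nonneg (Real.exp (Real.sqrt 2 * z) * deriv H z),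
      abs_nonneg (gfun (z - ψ / Real.sqrt 2))]
  · exact hint.abs.const_mul 4
  · filter_upwards with z
    have hdiv : Tendsto (fun ψ : ℝ => ψ / Real.sqrt 2) atTop atTop :=
      Tendsto.atTop_div_const hs2 tendsto_id
    have hneg : Tendsto (fun ψ : ℝ => -(ψ / Real.sqrt 2)) atTop atBot :=
      tendsto_neg_atTop_atBot.comp hdiv
    have harg : Tendsto (fun ψ : ℝ => z - ψ / Real.sqrt 2) atTop atBot := by
      simpa [sub_eq_add_neg] using tendsto_atBot_add_const_left atTop z hneg
    have := (gfun_tendsto.comp harg).const_mul (Real.exp (Real.sqrt 2 * z) * deriv H z)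
    rw [show (4 : ℝ) * (Real.exp (Real.sqrt 2 * z) * deriv H z)
        = (Real.exp (Real.sqrt 2 * z) * deriv H z) * 4 by ring]
    exact this
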